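/- On the Hilbert space H = ℓ²(ℕ, ℂ) with standard orthonormal basis (e_n), there exist a sequence (d_n) of strictly positive real numbers and positive compact operators S and T on H such that Σ_n d_n·⟪S e_n, e_n⟫ < ∞ and Σ_n d_n·⟪T e_n, e_n⟫ < ∞, while Σ_n d_n·⟪|S − T| e_n, e_n⟫ = ∞, where |S − T| denotes the absolute value of the self-adjoint operator S − T, i.e., the positive square root of (S − T)². (Thus, for the weight ψ(A) = Σ_n d_n·⟪A e_n, e_n⟫ on positive bounded operators, S and T lie in the domain {A ≥ 0 : ψ(A) < ∞} but |S − T| does not.) -/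

import Mathlib

open scoped InnerProductSpace NNReal ENNReal
set_option maxHeartbeats 1000000
set_option synthInstance.maxHeartbeats 400000

noncomputable section

namespace Stmt19

local notation "H" => lp (fun _ : ℕ => ℂ) 2

/-- the block swap `2k ↔ 2k+1` -/
def σf : ℕ → ℕ := fun n => if Even n then n + 1 else n - 1

lemma σf_invol : Function.Involutive σf := by
  intro n
  rcases Nat.even_or_odd n with h | h
  · have h1 : ¬ Even (n + 1) := by simpa [Nat.even_add_one] using h
    simp [σf, h, h1]
  · have h0 : ¬ Even n := Nat.not_even_iff_odd.mpr h
    obtain ⟨m, rfl⟩ := h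
    have h2 : Even (2 * m + 1 - 1) := by simpa using even_two_mul m
    simp [σf, h0, h2]

def σ : Equiv.Perm ℕ := σf_invol.toPerm

lemma σ_apply (n : ℕ) : σ n = if Even n then n + 1 else n - 1 := rfl

lemma σ_even (k : ℕ) : σ (2 * k) = 2 * k + 1 := by
  simp [σ_apply, even_two_mul k]

lemma σ_odd (k : ℕ) : σ (2 * k + 1) = 2 * k := by
  have : ¬ Even (2 * k + 1) := by simp [Nat.even_add_one, even_two_mul k]
  simp [σ_apply, this]

lemma σ_ne (n : ℕ) : σ n ≠ n := by
  rcases Nat.even_or_odd n with h | h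
  · simp [σ_apply, h]
  · obtain ⟨m, rfl⟩ := h
    rw [σ_odd]; omega

lemma σ_div_two (n : ℕ) : σ n / 2 = n / 2 := by
  rcases Nat.even_or_odd n with ⟨m, rfl⟩ | ⟨m, rfl⟩
  · rw [show m + m = 2 * m by ring, σ_even]; omega
  · rw [σ_odd]; omega

lemma σ_σ (n : ℕ) : σ (σ n) = n := σf_invol n

lemma pow_two_conv (a : ℝ) : a ^ (2 : ℝ≥0∞).toReal = a ^ (2 : ℕ) := by
  rw [ENNReal.toReal_ofNat, show (2:ℝ) = ((2:ℕ):ℝ) by norm_num, Real.rpow_natCast]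

lemma sq_summable (x : H) : Summable fun n => ‖x n‖ ^ (2 : ℕ) := by
  have h := (lp.memℓp x).summable (p := 2) (by norm_num)
  simpa [pow_two_conv] using h

lemma mop_memℓp (e : Equiv.Perm ℕ) (c : ℕ → ℝ) (C : ℝ) (hC : ∀ n, |c n| ≤ C) (x : H) :
    Memℓp (fun n => (c n : ℂ) * x (e n)) 2 := by
  apply memℓp_gen
  have hx : Summable fun n => ‖x (e n)‖ ^ (2 : ℕ) :=
    (sq_summable x).comp_injective e.injective
  have hg : Summable fun n => C ^ 2 * ‖x (e n)‖ ^ 2 := hx.mul_left _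
  have key : Summable fun n => ‖(c n : ℂ) * x (e n)‖ ^ (2 : ℕ) := by
    refine Summable.of_nonneg_of_le (fun n => by positivity) (fun n => ?_) hg
    rw [norm_mul, Complex.norm_real, Real.norm_eq_abs, mul_pow]
    have h1 : |c n| ^ 2 ≤ C ^ 2 := pow_le_pow_left₀ (abs_nonneg _) (hC n) 2
    exact mul_le_mul_of_nonneg_right h1 (by positivity)
  simpa [pow_two_conv] using key

lemma norm_sq_eq (x : H) : ‖x‖ ^ (2 : ℕ) = ∑' n, ‖x n‖ ^ (2 : ℕ) := by
  have h := lp.norm_rpow_eq_tsum (p := 2) (by norm_num) x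
  simpa [pow_two_conv] using h

lemma mop_norm_le (e : Equiv.Perm ℕ) (c : ℕ → ℝ) (M : ℝ) (hM0 : 0 ≤ M)
    (hM : ∀ n, |c n| ≤ M) (x : H) (y : H) (hy : ∀ n, y n = (c n : ℂ) * x (e n)) :
    ‖y‖ ≤ M * ‖x‖ := by
  refine lp.norm_le_of_tsum_le (by norm_num) (by positivity) ?_
  have hxe : Summable fun n => ‖x (e n)‖ ^ (2 : ℕ) :=
    (sq_summable x).comp_injective e.injective
  have hg : Summable fun n => M ^ 2 * ‖x (e n)‖ ^ 2 := hxe.mul_left _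
  have h1 : ∑' n, ‖y n‖ ^ (2 : ℕ) ≤ ∑' n, M ^ 2 * ‖x (e n)‖ ^ 2 := by
    refine Summable.tsum_le_tsum (fun n => ?_) (sq_summable y) hg
    rw [hy n, norm_mul, Complex.norm_real, Real.norm_eq_abs, mul_pow]
    exact mul_le_mul_of_nonneg_right
      (pow_le_pow_left₀ (abs_nonneg _) (hM n) 2) (by positivity)
  have h2 : ∑' n, M ^ 2 * ‖x (e n)‖ ^ 2 = M ^ 2 * ‖x‖ ^ 2 := by
    rw [tsum_mul_left, norm_sq_eq x]
    congr 1
    exact e.tsum_eq fun n => ‖x n‖ ^ 2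
  calc ∑' n, ‖y n‖ ^ (2 : ℝ≥0∞).toReal = ∑' n, ‖y n‖ ^ (2 : ℕ) := by
        simp [pow_two_conv]
    _ ≤ M ^ 2 * ‖x‖ ^ 2 := h1.trans h2.le
    _ = (M * ‖x‖) ^ (2 : ℕ) := by ring
    _ = (M * ‖x‖) ^ (2 : ℝ≥0∞).toReal := (pow_two_conv _).symm

/-- `x ↦ (n ↦ c n * x (e n))` as a continuous linear operator. -/
def mop (e : Equiv.Perm ℕ) (c : ℕ → ℝ) (C : ℝ) (hC : ∀ n, |c n| ≤ C) :
    H →L[ℂ] H :=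
  LinearMap.mkContinuous
    { toFun := fun x => (⟨fun n => (c n : ℂ) * x (e n), mop_memℓp e c C hC x⟩ : H)
      map_add' := fun x y => by
        apply lp.ext; funext n
        show (c n : ℂ) * (x + y) (e n) = _
        simp only [lp.coeFn_add, Pi.add_apply]
        show _ = (c n : ℂ) * x (e n) + (c n : ℂ) * y (e n)
        ring
      map_smul' := fun a x => by
        apply lp.ext; funext n
        show (c n : ℂ) * (a • x) (e n) = _
        simp only [lp.coeFn_smul, Pi.smul_apply, smul_eq_mul, RingHom.id_apply]
        show _ = a * ((c n : ℂ) * x (e n))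
        ring }
    C
    (fun x => mop_norm_le e c C (le_trans (abs_nonneg _) (hC 0)) hC x _ (fun n => rfl))

lemma mop_apply (e : Equiv.Perm ℕ) (c : ℕ → ℝ) (C : ℝ) (hC : ∀ n, |c n| ≤ C)
    (x : H) (n : ℕ) : (mop e c C hC x) n = (c n : ℂ) * x (e n) := rfl

lemma mop_opNorm_le (e : Equiv.Perm ℕ) (c : ℕ → ℝ) (C : ℝ) (hC : ∀ n, |c n| ≤ C)
    (M : ℝ) (hM0 : 0 ≤ M) (hM : ∀ n, |c n| ≤ M) :
    ‖mop e c C hC‖ ≤ M :=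
  ContinuousLinearMap.opNorm_le_bound _ hM0 fun x =>
    mop_norm_le e c M hM0 hM x _ (fun n => rfl)


lemma mop_isSymmetric (e : Equiv.Perm ℕ) (c : ℕ → ℝ) (C : ℝ) (hC : ∀ n, |c n| ≤ C)
    (hce : ∀ n, c (e n) = c n) (hee : ∀ n, e (e n) = n) :
    IsSelfAdjoint (mop e c C hC) := by
  rw [ContinuousLinearMap.isSelfAdjoint_iff_isSymmetric]
  intro x y
  rw [lp.inner_eq_tsum, lp.inner_eq_tsum]
  have key : ∀ n, ⟪(mop e c C hC x) n, y n⟫_ℂ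
      = (fun m => ⟪x m, (mop e c C hC y) m⟫_ℂ) (e n) := by
    intro n
    simp only [RCLike.inner_apply, mop_apply, hce n, hee n, map_mul, Complex.conj_ofReal]
    ring
  calc ∑' n, ⟪(mop e c C hC x) n, y n⟫_ℂ
      = ∑' n, (fun m => ⟪x m, (mop e c C hC y) m⟫_ℂ) (e n) := by
        exact tsum_congr key
    _ = ∑' m, ⟪x m, (mop e c C hC y) m⟫_ℂ :=
        e.tsum_eq (fun m => ⟪x m, (mop e c C hC y) m⟫_ℂ)

lemma compact_smulRight (φ : H →L[ℂ] ℂ) (v : H) :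
    IsCompactOperator (φ.smulRight v) := by
  rw [isCompactOperator_iff_exists_mem_nhds_image_subset_compact]
  refine ⟨Metric.closedBall 0 1, Metric.closedBall_mem_nhds 0 one_pos,
    (fun z : ℂ => z • v) '' Metric.closedBall 0 ‖φ‖,
    (isCompact_closedBall 0 ‖φ‖).image (continuous_id.smul continuous_const), ?_⟩
  rintro w ⟨x, hx, rfl⟩
  refine ⟨φ x, ?_, by simp⟩
  rw [Metric.mem_closedBall, dist_zero_right]
  calc ‖φ x‖ ≤ ‖φ‖ * ‖x‖ := φ.le_opNorm x
    _ ≤ ‖φ‖ * 1 := by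
        have := mem_closedBall_zero_iff.mp hx
        exact mul_le_mul_of_nonneg_left this (norm_nonneg _)
    _ = ‖φ‖ := mul_one _

lemma compact_sum (s : Finset ℕ) (F : ℕ → H →L[ℂ] H)
    (h : ∀ n, IsCompactOperator (F n)) :
    IsCompactOperator (∑ n ∈ s, F n) := by
  classical
  induction s using Finset.induction with
  | empty => simpa using isCompactOperator_zero
  | @insert a s ha ih =>
      rw [Finset.sum_insert ha]
      exact (h a).add ih

/-- finite rank truncation -/
def fr (e : Equiv.Perm ℕ) (c : ℕ → ℝ) (m : ℕ) : H →L[ℂ] H :=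
  ∑ n ∈ Finset.range (2 * m),
    (innerSL ℂ (lp.single 2 (e n) (1 : ℂ))).smulRight (lp.single 2 n ((c n : ℂ)))

lemma fr_apply (e : Equiv.Perm ℕ) (c : ℕ → ℝ) (m : ℕ) (x : H) (j : ℕ) :
    (fr e c m x) j = if j < 2 * m then (c j : ℂ) * x (e j) else 0 := by
  have hsum : (fr e c m x) j
      = ∑ n ∈ Finset.range (2 * m),
          (((innerSL ℂ (lp.single 2 (e n) (1 : ℂ))).smulRight
            (lp.single 2 n ((c n : ℂ)))) x) j := by
    rw [fr, ContinuousLinearMap.sum_apply, lp.coeFn_sum, Finset.sum_apply]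
  have happ : ∀ n : ℕ, ((((innerSL ℂ (lp.single 2 (e n) (1 : ℂ))).smulRight
      (lp.single 2 n ((c n : ℂ))) : H →L[ℂ] H) x) j : ℂ)
      = if j = n then (x (e n) * ((c n : ℝ) : ℂ) : ℂ) else (0 : ℂ) := by
    intro n
    rw [ContinuousLinearMap.smulRight_apply]
    have h1 : (innerSL ℂ (lp.single 2 (e n) (1 : ℂ))) x = x (e n) := by
      rw [innerSL_apply_apply, lp.inner_single_left]
      simp [RCLike.inner_apply]
    rw [h1, lp.coeFn_smul, Pi.smul_apply, lp.single_apply]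
    split_ifs with h
    · subst h; simp [smul_eq_mul]
    · simp [Pi.single_apply, h]
  rw [hsum, Finset.sum_congr rfl (fun n _ => happ n),
    Finset.sum_ite_eq (Finset.range (2 * m)) j]
  simp only [Finset.mem_range]
  split_ifs with h
  · ring
  · rfl

lemma fr_compact (e : Equiv.Perm ℕ) (c : ℕ → ℝ) (m : ℕ) :
    IsCompactOperator (fr e c m) := by
  have := compact_sum (Finset.range (2 * m))
    (fun n => ((innerSL ℂ (lp.single 2 (e n) (1 : ℂ))).smulRight
      (lp.single 2 n ((c n : ℂ))))) (fun n => compact_smulRight _ _)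
  rw [show ⇑(fr e c m) = ∑ n ∈ Finset.range (2 * m),
    ⇑((innerSL ℂ (lp.single 2 (e n) (1 : ℂ))).smulRight (lp.single 2 n ((c n : ℂ))))
    from by rw [fr, ContinuousLinearMap.coe_sum']]
  exact this

lemma tail_bdd (c : ℕ → ℝ) (C : ℝ) (hC : ∀ n, |c n| ≤ C) (m : ℕ) :
    ∀ n, |(fun n => if n < 2 * m then 0 else c n) n| ≤ C := by
  intro n
  dsimp only
  split_ifs with h
  · simpa using le_trans (abs_nonneg _) (hC 0)
  · exact hC n

lemma mop_truncation_eq (e : Equiv.Perm ℕ) (c : ℕ → ℝ) (C : ℝ) (hC : ∀ n, |c n| ≤ C)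
    (m : ℕ) :
    mop e c C hC
      = fr e c m + mop e (fun n => if n < 2 * m then 0 else c n) C (tail_bdd c C hC m) := by
  refine ContinuousLinearMap.ext fun x => lp.ext (funext fun j => ?_)
  have : ((fr e c m + mop e (fun n => if n < 2 * m then 0 else c n) C
      (tail_bdd c C hC m)) x) j
      = (fr e c m x) j + (mop e (fun n => if n < 2 * m then 0 else c n) C
          (tail_bdd c C hC m) x) j := by
    rw [ContinuousLinearMap.add_apply, lp.coeFn_add, Pi.add_apply]
  rw [this, fr_apply, mop_apply, mop_apply]
  split_ifs with h
  · push_cast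
    ring
  · push_cast
    ring

lemma mop_compact (e : Equiv.Perm ℕ) (c : ℕ → ℝ) (C : ℝ) (hC : ∀ n, |c n| ≤ C)
    (q K : ℝ) (hq0 : 0 ≤ q) (hq1 : q < 1) (hK : 0 ≤ K)
    (hb : ∀ n, |c n| ≤ K * q ^ (n / 2)) :
    IsCompactOperator (mop e c C hC) := by
  have htend : Filter.Tendsto (fun m => fr e c m) Filter.atTop (nhds (mop e c C hC)) := by
    rw [tendsto_iff_norm_sub_tendsto_zero]
    have hbound : ∀ m, ‖fr e c m - mop e c C hC‖ ≤ K * q ^ m := by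
      intro m
      have hdiff : fr e c m - mop e c C hC
          = -(mop e (fun n => if n < 2 * m then 0 else c n) C (tail_bdd c C hC m)) := by
        rw [mop_truncation_eq e c C hC m]
        abel
      rw [hdiff, norm_neg]
      refine mop_opNorm_le _ _ _ _ (K * q ^ m) (by positivity) (fun n => ?_)
      split_ifs with h
      · simpa using (by positivity : (0:ℝ) ≤ K * q ^ m)
      · refine le_trans (hb n) ?_
        have hmn : m ≤ n / 2 := by omega
        exact mul_le_mul_of_nonneg_left (pow_le_pow_of_le_one hq0 hq1.le hmn) hK
    have h0 : Filter.Tendsto (fun m : ℕ => K * q ^ m) Filter.atTop (nhds 0) := by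
      simpa using (tendsto_pow_atTop_nhds_zero_of_lt_one hq0 hq1).const_mul K
    exact squeeze_zero (fun m => norm_nonneg _) hbound h0
  exact isCompactOperator_of_tendsto htend
    (Filter.Eventually.of_forall fun m => fr_compact e c m)

/-! ### The concrete sequences -/

def cs : ℕ → ℝ := fun n => if Even n then (2⁻¹ : ℝ) ^ (n / 2) else (2⁻¹ : ℝ) ^ (3 * (n / 2))
def c2 : ℕ → ℝ := fun n => (2⁻¹ : ℝ) ^ (2 * (n / 2))
def c3 : ℕ → ℝ := fun n => 2 * (2⁻¹ : ℝ) ^ (2 * (n / 2))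
def dd : ℕ → ℝ := fun n => if Even n then 1 else (4 : ℝ) ^ (n / 2)

lemma cs_nonneg (n : ℕ) : 0 ≤ cs n := by unfold cs; split_ifs <;> positivity
lemma c2_nonneg (n : ℕ) : 0 ≤ c2 n := by unfold c2; positivity
lemma c3_nonneg (n : ℕ) : 0 ≤ c3 n := by unfold c3; positivity
lemma dd_pos (n : ℕ) : 0 < dd n := by unfold dd; split_ifs <;> positivity

lemma half_pow_le_one (k : ℕ) : ((2:ℝ)⁻¹) ^ k ≤ 1 :=
  pow_le_one₀ (by norm_num) (by norm_num)

lemma cs_bdd (n : ℕ) : |cs n| ≤ 1 := by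
  rw [abs_of_nonneg (cs_nonneg n)]
  unfold cs; split_ifs <;> exact half_pow_le_one _

lemma c2_bdd (n : ℕ) : |c2 n| ≤ 1 := by
  rw [abs_of_nonneg (c2_nonneg n)]
  exact half_pow_le_one _

lemma c3_bdd (n : ℕ) : |c3 n| ≤ 2 := by
  rw [abs_of_nonneg (c3_nonneg n)]
  unfold c3
  nlinarith [half_pow_le_one (2 * (n / 2)), pow_nonneg (by norm_num : (0:ℝ) ≤ 2⁻¹) (2 * (n / 2))]

lemma cs_geom (n : ℕ) : |cs n| ≤ 1 * (2⁻¹:ℝ) ^ (n / 2) := by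
  rw [abs_of_nonneg (cs_nonneg n), one_mul]
  unfold cs
  split_ifs with h
  · exact le_rfl
  · exact pow_le_pow_of_le_one (by norm_num) (by norm_num) (by omega)

lemma c2_geom (n : ℕ) : |c2 n| ≤ 1 * (2⁻¹:ℝ) ^ (n / 2) := by
  rw [abs_of_nonneg (c2_nonneg n), one_mul]
  exact pow_le_pow_of_le_one (by norm_num) (by norm_num) (by omega)

lemma c3_geom (n : ℕ) : |c3 n| ≤ 2 * (2⁻¹:ℝ) ^ (n / 2) := by
  rw [abs_of_nonneg (c3_nonneg n)]
  unfold c3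
  have := pow_le_pow_of_le_one (by norm_num : (0:ℝ) ≤ 2⁻¹) (by norm_num) (by omega : n / 2 ≤ 2 * (n / 2))
  nlinarith

lemma c2_sigma (n : ℕ) : c2 (σ n) = c2 n := by unfold c2; rw [σ_div_two]
lemma c3_even (k : ℕ) : c3 (2 * k) = 2 * (2⁻¹:ℝ) ^ (2 * k) := by unfold c3; norm_num
lemma c3_odd (k : ℕ) : c3 (2 * k + 1) = 2 * (2⁻¹:ℝ) ^ (2 * k) := by
  unfold c3; norm_num [Nat.mul_add_div]

/-! ### The operators -/

def Sop : H →L[ℂ] H := mop 1 cs 1 cs_bdd + mop σ c2 1 c2_bdd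
def Topp : H →L[ℂ] H := mop 1 cs 1 cs_bdd - mop σ c2 1 c2_bdd
def Rop : H →L[ℂ] H := mop 1 c3 2 c3_bdd

lemma Sop_coord (x : H) (n : ℕ) :
    (Sop x) n = (cs n : ℂ) * x n + (c2 n : ℂ) * x (σ n) := by
  have : (Sop x) n = (mop 1 cs 1 cs_bdd x) n + (mop σ c2 1 c2_bdd x) n := by
    rw [Sop, ContinuousLinearMap.add_apply, lp.coeFn_add, Pi.add_apply]
  rw [this, mop_apply, mop_apply, Equiv.Perm.one_apply]

lemma Top_coord (x : H) (n : ℕ) :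
    (Topp x) n = (cs n : ℂ) * x n - (c2 n : ℂ) * x (σ n) := by
  have : (Topp x) n = (mop 1 cs 1 cs_bdd x) n - (mop σ c2 1 c2_bdd x) n := by
    rw [Topp, ContinuousLinearMap.sub_apply, lp.coeFn_sub, Pi.sub_apply]
  rw [this, mop_apply, mop_apply, Equiv.Perm.one_apply]

lemma Rop_coord (x : H) (n : ℕ) : (Rop x) n = (c3 n : ℂ) * x n := by
  rw [Rop, mop_apply, Equiv.Perm.one_apply]

lemma Sop_selfAdjoint : IsSelfAdjoint Sop :=
  (mop_isSymmetric 1 cs 1 cs_bdd (fun _ => rfl) (fun _ => rfl)).add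
    (mop_isSymmetric σ c2 1 c2_bdd c2_sigma σ_σ)

lemma Top_selfAdjoint : IsSelfAdjoint Topp :=
  (mop_isSymmetric 1 cs 1 cs_bdd (fun _ => rfl) (fun _ => rfl)).sub
    (mop_isSymmetric σ c2 1 c2_bdd c2_sigma σ_σ)

lemma Rop_selfAdjoint : IsSelfAdjoint Rop :=
  mop_isSymmetric 1 c3 2 c3_bdd (fun _ => rfl) (fun _ => rfl)

/-! ### quadratic form computations -/

lemma re_inner_eq (y x : H) :
    (⟪y, x⟫_ℂ).re = ∑' n, (⟪y n, x n⟫_ℂ).re :=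
  (Complex.hasSum_re (lp.hasSum_inner y x)).tsum_eq.symm

lemma summable_re_inner (y x : H) :
    Summable fun n => (⟪y n, x n⟫_ℂ).re :=
  (Complex.hasSum_re (lp.hasSum_inner y x)).summable

lemma block_nonneg (t ν : ℝ) (ht : 0 ≤ t) (hν : ν * ν = 1) (a b : ℂ) :
    0 ≤ ((starRingEnd ℂ) ((t:ℂ) * a + (ν:ℂ) * ((t:ℂ))^2 * b) * a).re
      + ((starRingEnd ℂ) (((t:ℂ))^3 * b + (ν:ℂ) * ((t:ℂ))^2 * a) * b).re := by
  have h1 : ((starRingEnd ℂ) ((t:ℂ) * a + (ν:ℂ) * ((t:ℂ))^2 * b) * a).re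
      + ((starRingEnd ℂ) (((t:ℂ))^3 * b + (ν:ℂ) * ((t:ℂ))^2 * a) * b).re
      = t * ((a.re + ν*t*b.re)^2 + (a.im + ν*t*b.im)^2)
        + (1 - ν*ν) * t^3 * (b.re^2 + b.im^2) := by
    simp only [map_add, map_mul, map_pow, Complex.conj_ofReal, ← Complex.ofReal_pow,
      Complex.add_re, Complex.mul_re, Complex.mul_im, Complex.ofReal_re, Complex.ofReal_im,
      Complex.add_im, Complex.conj_re, Complex.conj_im]
    ring
  rw [h1, hν]
  have h2 : ((1:ℝ) - 1) * t^3 * (b.re^2 + b.im^2) = 0 := by ring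
  rw [h2, add_zero]
  exact mul_nonneg ht (by positivity)

lemma pos_of_blocks (A : H →L[ℂ] H) (ν : ℝ) (hν : ν * ν = 1)
    (hA : ∀ (x : H) (n : ℕ), (A x) n = (cs n : ℂ) * x n + (ν : ℂ) * (c2 n : ℂ) * x (σ n))
    (x : H) : 0 ≤ (⟪A x, x⟫_ℂ).re := by
  rw [re_inner_eq]
  set G : ℕ → ℝ := fun n => (⟪(A x) n, x n⟫_ℂ).re with hG
  have hGs : Summable G := summable_re_inner (A x) x
  have hinj2 : Function.Injective (fun k : ℕ => 2 * k) := fun a b h => by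
    have h' : 2 * a = 2 * b := h
    omega
  have hinj21 : Function.Injective (fun k : ℕ => 2 * k + 1) := fun a b h => by
    have h' : 2 * a + 1 = 2 * b + 1 := h
    omega
  have he : Summable fun k => G (2 * k) := hGs.comp_injective hinj2
  have ho : Summable fun k => G (2 * k + 1) := hGs.comp_injective hinj21
  have heo : (∑' k, G (2 * k)) + ∑' k, G (2 * k + 1) = ∑' n, G n :=
    tsum_even_add_odd he ho
  rw [← heo, ← Summable.tsum_add he ho]
  refine tsum_nonneg fun k => ?_
  set t : ℝ := (2⁻¹ : ℝ) ^ k with hkt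
  have hteq : 0 ≤ t := by positivity
  have hde : 2 * k / 2 = k := by omega
  have hdo : (2 * k + 1) / 2 = k := by omega
  have hcs_e : cs (2 * k) = t := by
    unfold cs; rw [if_pos (even_two_mul k), hde, hkt]
  have hcs_o : cs (2 * k + 1) = t ^ 3 := by
    have hno : ¬ Even (2 * k + 1) := by simp [Nat.even_add_one, even_two_mul k]
    unfold cs; rw [if_neg hno, hdo, hkt, ← pow_mul, mul_comm 3 k]
  have hc2_e : c2 (2 * k) = t ^ 2 := by
    unfold c2; rw [hde, hkt, ← pow_mul, mul_comm 2 k]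
  have hc2_o : c2 (2 * k + 1) = t ^ 2 := by
    unfold c2; rw [hdo, hkt, ← pow_mul, mul_comm 2 k]
  have hGe : G (2 * k) = ((starRingEnd ℂ) ((t:ℂ) * x (2 * k)
      + (ν:ℂ) * ((t:ℂ))^2 * x (2 * k + 1)) * x (2 * k)).re := by
    rw [hG]; dsimp only
    rw [RCLike.inner_apply, hA x (2 * k), hcs_e, hc2_e, σ_even]
    push_cast
    ring_nf
  have hGo : G (2 * k + 1) = ((starRingEnd ℂ) (((t:ℂ))^3 * x (2 * k + 1)
      + (ν:ℂ) * ((t:ℂ))^2 * x (2 * k)) * x (2 * k + 1)).re := by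
    rw [hG]; dsimp only
    rw [RCLike.inner_apply, hA x (2 * k + 1), hcs_o, hc2_o, σ_odd]
    push_cast
    ring_nf
  rw [hGe, hGo]
  exact block_nonneg t ν hteq hν (x (2 * k)) (x (2 * k + 1))

lemma Sop_isPositive : Sop.IsPositive := by
  refine ⟨Sop_selfAdjoint.isSymmetric, fun x => ?_⟩
  have := pos_of_blocks Sop 1 (by norm_num)
    (fun x n => by rw [Sop_coord]; push_cast; ring) x
  simpa [ContinuousLinearMap.reApplyInnerSelf] using this

lemma Top_isPositive : Topp.IsPositive := by
  refine ⟨Top_selfAdjoint.isSymmetric, fun x => ?_⟩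
  have := pos_of_blocks Topp (-1) (by norm_num)
    (fun x n => by rw [Top_coord]; push_cast; ring) x
  simpa [ContinuousLinearMap.reApplyInnerSelf] using this

lemma Rop_isPositive : Rop.IsPositive := by
  refine ⟨Rop_selfAdjoint.isSymmetric, fun x => ?_⟩
  have key : 0 ≤ (⟪Rop x, x⟫_ℂ).re := by
    rw [re_inner_eq]
    refine tsum_nonneg fun n => ?_
    rw [RCLike.inner_apply, Rop_coord]
    have hre : ((starRingEnd ℂ) ((c3 n : ℂ) * x n) * x n).re
        = c3 n * ((x n).re ^ 2 + (x n).im ^ 2) := by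
      simp only [map_mul, Complex.conj_ofReal, Complex.mul_re, Complex.mul_im,
        Complex.conj_re, Complex.conj_im, Complex.ofReal_re, Complex.ofReal_im]
      ring
    rw [mul_comm _ ((starRingEnd ℂ) _), hre]
    exact mul_nonneg (c3_nonneg n) (by positivity)
  simpa [ContinuousLinearMap.reApplyInnerSelf] using key

/-! ### compactness -/

lemma Sop_compact : IsCompactOperator Sop := by
  have h1 := mop_compact 1 cs 1 cs_bdd 2⁻¹ 1 (by norm_num) (by norm_num) (by norm_num) cs_geom
  have h2 := mop_compact σ c2 1 c2_bdd 2⁻¹ 1 (by norm_num) (by norm_num) (by norm_num) c2_geom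
  have := h1.add h2
  rwa [show ⇑(mop 1 cs 1 cs_bdd) + ⇑(mop σ c2 1 c2_bdd) = ⇑Sop from
    by rw [Sop, ContinuousLinearMap.coe_add']] at this

lemma Top_compact : IsCompactOperator Topp := by
  have h1 := mop_compact 1 cs 1 cs_bdd 2⁻¹ 1 (by norm_num) (by norm_num) (by norm_num) cs_geom
  have h2 := mop_compact σ c2 1 c2_bdd 2⁻¹ 1 (by norm_num) (by norm_num) (by norm_num) c2_geom
  have := h1.sub h2
  rwa [show ⇑(mop 1 cs 1 cs_bdd) - ⇑(mop σ c2 1 c2_bdd) = ⇑Topp from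
    by rw [Topp, ContinuousLinearMap.coe_sub']] at this

lemma Rop_compact : IsCompactOperator Rop :=
  mop_compact 1 c3 2 c3_bdd 2⁻¹ 2 (by norm_num) (by norm_num) (by norm_num) c3_geom

/-! ### diagonal entries -/

lemma re_inner_single (A : H →L[ℂ] H) (n : ℕ) :
    (⟪A (lp.single 2 n (1:ℂ)), lp.single 2 n (1:ℂ)⟫_ℂ).re
      = ((A (lp.single 2 n (1:ℂ))) n).re := by
  rw [lp.inner_single_right]
  simp [RCLike.inner_apply]

lemma Sop_diag (n : ℕ) :
    (⟪Sop (lp.single 2 n (1:ℂ)), lp.single 2 n (1:ℂ)⟫_ℂ).re = cs n := by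
  rw [re_inner_single, Sop_coord, lp.single_apply_self,
    lp.single_apply_ne 2 n _ (σ_ne n)]
  simp

lemma Top_diag (n : ℕ) :
    (⟪Topp (lp.single 2 n (1:ℂ)), lp.single 2 n (1:ℂ)⟫_ℂ).re = cs n := by
  rw [re_inner_single, Top_coord, lp.single_apply_self,
    lp.single_apply_ne 2 n _ (σ_ne n)]
  simp

lemma Rop_diag (n : ℕ) :
    (⟪Rop (lp.single 2 n (1:ℂ)), lp.single 2 n (1:ℂ)⟫_ℂ).re = c3 n := by
  rw [re_inner_single, Rop_coord, lp.single_apply_self]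
  simp

/-! ### summability -/

lemma summable_dcs : Summable (fun n => dd n * cs n) := by
  have hfun : ∀ n, dd n * cs n = (2⁻¹:ℝ) ^ (n / 2) := by
    intro n
    rcases Nat.even_or_odd n with h | h
    · unfold dd cs; rw [if_pos h, if_pos h, one_mul]
    · have hne : ¬ Even n := Nat.not_even_iff_odd.mpr h
      unfold dd cs; rw [if_neg hne, if_neg hne]
      rw [show 3 * (n / 2) = 2 * (n / 2) + n / 2 by ring, pow_add, ← mul_assoc]
      have h4 : (4:ℝ) ^ (n / 2) * (2⁻¹) ^ (2 * (n / 2)) = 1 := by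
        rw [pow_mul, ← mul_pow]; norm_num
      rw [h4, one_mul]
  refine Summable.congr ?_ (fun n => (hfun n).symm)
  have hgeo : Summable (fun k : ℕ => (2⁻¹:ℝ) ^ k) :=
    summable_geometric_of_lt_one (by norm_num) (by norm_num)
  refine Summable.even_add_odd ?_ ?_
  · refine hgeo.congr fun k => ?_
    congr 1
    omega
  · refine hgeo.congr fun k => ?_
    congr 1
    omega

lemma dd_c3_odd (k : ℕ) : dd (2 * k + 1) * c3 (2 * k + 1) = 2 := by
  have hne : ¬ Even (2 * k + 1) := by simp [Nat.even_add_one, even_two_mul k]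
  unfold dd
  rw [if_neg hne, c3_odd, show (2 * k + 1) / 2 = k by omega]
  have h4 : (4:ℝ) ^ k * (2⁻¹) ^ (2 * k) = 1 := by
    rw [pow_mul, ← mul_pow]; norm_num
  nlinarith

/-! ### the square identity -/

lemma diff_coord (x : H) (n : ℕ) : ((Sop - Topp) x) n = 2 * (c2 n : ℂ) * x (σ n) := by
  have : ((Sop - Topp) x) n = (Sop x) n - (Topp x) n := by
    rw [ContinuousLinearMap.sub_apply, lp.coeFn_sub, Pi.sub_apply]
  rw [this, Sop_coord, Top_coord]; ring

lemma sq_eq : Rop * Rop = (Sop - Topp) * (Sop - Topp) := by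
  refine ContinuousLinearMap.ext fun x => lp.ext (funext fun n => ?_)
  rw [ContinuousLinearMap.mul_apply, ContinuousLinearMap.mul_apply]
  rw [Rop_coord, Rop_coord, diff_coord, diff_coord, σ_σ, c2_sigma]
  have hc : c3 n = 2 * c2 n := rfl
  rw [hc]; push_cast; ring

end Stmt19

open Stmt19 in
/-- On `H = ℓ²(ℕ, ℂ)` with standard orthonormal basis `(e_n)`, there are
strictly positive reals `(d_n)` and positive compact operators `S, T` with
`Σ d_n ⟪S e_n, e_n⟫ < ∞` and `Σ d_n ⟪T e_n, e_n⟫ < ∞`, while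
`Σ d_n ⟪|S − T| e_n, e_n⟫ = ∞`, where `|S − T|` is the positive square root of `(S − T)²`. -/
theorem stmt19 :
    ∃ (d : ℕ → ℝ)
      (S T : lp (fun _ : ℕ => ℂ) 2 →L[ℂ] lp (fun _ : ℕ => ℂ) 2),
      (∀ n, 0 < d n) ∧
      S.IsPositive ∧ IsCompactOperator S ∧
      T.IsPositive ∧ IsCompactOperator T ∧
      Summable (fun n => d n * (⟪S (lp.single 2 n (1 : ℂ)), lp.single 2 n (1 : ℂ)⟫_ℂ).re) ∧
      Summable (fun n => d n * (⟪T (lp.single 2 n (1 : ℂ)), lp.single 2 n (1 : ℂ)⟫_ℂ).re) ∧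
      ∀ R : lp (fun _ : ℕ => ℂ) 2 →L[ℂ] lp (fun _ : ℕ => ℂ) 2,
        R.IsPositive → R * R = (S - T) * (S - T) →
        ¬ Summable (fun n =>
            d n * (⟪R (lp.single 2 n (1 : ℂ)), lp.single 2 n (1 : ℂ)⟫_ℂ).re) := by
  refine ⟨dd, Sop, Topp, dd_pos, Sop_isPositive, Sop_compact, Top_isPositive, Top_compact,
    ?_, ?_, ?_⟩
  · exact summable_dcs.congr fun n => by rw [Sop_diag]
  · exact summable_dcs.congr fun n => by rw [Top_diag]
  · intro R hRpos hRsq hsum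
    have hR0 : 0 ≤ R := (ContinuousLinearMap.nonneg_iff_isPositive R).mpr hRpos
    have hRop0 : 0 ≤ Rop := (ContinuousLinearMap.nonneg_iff_isPositive Rop).mpr Rop_isPositive
    haveI : ContinuousFunctionalCalculus ℝ (lp (fun _ : ℕ => ℂ) 2 →L[ℂ] lp (fun _ : ℕ => ℂ) 2)
        IsSelfAdjoint := IsSelfAdjoint.instContinuousFunctionalCalculus
    haveI : NonUnitalContinuousFunctionalCalculus ℝ
        (lp (fun _ : ℕ => ℂ) 2 →L[ℂ] lp (fun _ : ℕ => ℂ) 2) IsSelfAdjoint :=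
      ContinuousFunctionalCalculus.toNonUnital
    have e1 : CFC.sqrt ((Sop - Topp) * (Sop - Topp)) = R := CFC.sqrt_unique hRsq hR0
    have e2 : CFC.sqrt ((Sop - Topp) * (Sop - Topp)) = Rop := CFC.sqrt_unique sq_eq hRop0
    have hRR : R = Rop := e1.symm.trans e2
    rw [hRR] at hsum
    have hterm : ∀ k : ℕ, dd (2 * k + 1)
        * ((⟪Rop (lp.single 2 (2 * k + 1) (1:ℂ)), lp.single 2 (2 * k + 1) (1:ℂ)⟫_ℂ).re)
        = 2 := by
      intro k
      rw [Rop_diag]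
      exact dd_c3_odd k
    have htt : Filter.Tendsto (fun k : ℕ => 2 * k + 1) Filter.atTop Filter.atTop :=
      Filter.tendsto_atTop_mono (fun k => by simpa using (by omega : k ≤ 2 * k + 1)) Filter.tendsto_id
    have h0 := (hsum.tendsto_atTop_zero).comp htt
    have h2 : Filter.Tendsto (fun _ : ℕ => (2:ℝ)) Filter.atTop (nhds 0) := by
      refine Filter.Tendsto.congr (fun k => ?_) h0
      exact hterm k
    have := tendsto_nhds_unique h2 tendsto_const_nhds
    norm_num at this
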